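/- Let X be a topological space, x ∈ X a point, and let 𝒞_x denote the stalk at x of the sheaf of continuous real-valued functions on X (the ℝ-algebra of germs at x of continuous real-valued functions defined on open neighbourhoods of x). Then for every natural number q, every unital ℝ-algebra homomorphism φ from 𝒞_x to the Grassmann algebra ∧(q) over ℝ is given by evaluation at x followed by the unit map: φ(germ of f) = f(x)·1 for every continuous real-valued function f defined near x. In particular, the only unital ℝ-algebra homomorphism 𝒞_x → ∧(q) is the augmentation (evaluation) homomorphism. -/
import Mathlib


open Filter Topology

/-- The algebra of germs at a filter: `Filter.Germ l ℝ` as an `ℝ`-algebra. -/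
noncomputable instance germAlgebra {α : Type} (l : Filter α) :
    Algebra ℝ (Filter.Germ l ℝ) :=
  Algebra.ofModule
    (fun r x y => Filter.Germ.inductionOn₂ x y fun f g => by
      rw [← Filter.Germ.coe_smul, ← Filter.Germ.coe_mul, ← Filter.Germ.coe_mul,
        ← Filter.Germ.coe_smul, smul_mul_assoc])
    (fun r x y => Filter.Germ.inductionOn₂ x y fun f g => by
      rw [← Filter.Germ.coe_smul, ← Filter.Germ.coe_mul, ← Filter.Germ.coe_mul,
        ← Filter.Germ.coe_smul, mul_smul_comm])

/-- The stalk at `x` of the sheaf of continuous real-valued functions on `X`: the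
`ℝ`-algebra of germs at `x` of real-valued functions that are continuous near `x`,
realized as a subalgebra of the algebra of all germs of functions at `𝓝 x`. -/
noncomputable def contGerms (X : Type) [TopologicalSpace X] (x : X) :
    Subalgebra ℝ (Filter.Germ (𝓝 x) ℝ) where
  carrier := {g | ∃ f : X → ℝ, (∀ᶠ y in 𝓝 x, ContinuousAt f y) ∧ g = ↑f}
  mul_mem' := by
    rintro a b ⟨f, hf, rfl⟩ ⟨g, hg, rfl⟩
    exact ⟨f * g, (hf.and hg).mono fun y hy => hy.1.mul hy.2,
      (Filter.Germ.coe_mul _ _).symm⟩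
  add_mem' := by
    rintro a b ⟨f, hf, rfl⟩ ⟨g, hg, rfl⟩
    exact ⟨f + g, (hf.and hg).mono fun y hy => hy.1.add hy.2,
      (Filter.Germ.coe_add _ _).symm⟩
  algebraMap_mem' r := by
    refine ⟨fun _ => r, Filter.Eventually.of_forall fun _ => continuousAt_const, ?_⟩
    rw [Algebra.algebraMap_eq_smul_one, ← Filter.Germ.coe_one, ← Filter.Germ.coe_smul]
    congr 1
    funext y
    simp

/-- The Grassmann algebra `∧(q)` over `ℝ`: the exterior algebra of `ℝ^q`. -/
noncomputable abbrev Grassmann (q : ℕ) : Type := ExteriorAlgebra ℝ (Fin q → ℝ)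



set_option maxHeartbeats 1000000 in
open ExteriorAlgebra in
lemma grass_pow_zero {q : ℕ} (a : Grassmann q) (ha : algebraMapInv a = 0) :
    a ^ (q + 1) = 0 := by
  set ιR : (Fin q → ℝ) →ₗ[ℝ] Grassmann q := ι ℝ with hι
  set N : Submodule ℝ (Grassmann q) := LinearMap.range ιR * ⊤ with hN
  have hleft : ∀ y : Grassmann q, ∀ n ∈ N, y * n ∈ N := by
    intro y
    induction y using ExteriorAlgebra.induction with
    | algebraMap r =>
        intro n hn
        rw [Algebra.algebraMap_eq_smul_one, smul_mul_assoc, one_mul]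
        exact N.smul_mem r hn
    | ι m =>
        intro n _
        exact Submodule.mul_mem_mul (LinearMap.mem_range_self _ m) trivial
    | mul a b ha hb =>
        intro n hn
        rw [mul_assoc]
        exact ha _ (hb _ hn)
    | add a b ha hb =>
        intro n hn
        rw [add_mul]
        exact N.add_mem (ha _ hn) (hb _ hn)
  have hright : ∀ n ∈ N, ∀ y : Grassmann q, n * y ∈ N := by
    intro n hn
    refine Submodule.mul_induction_on hn (fun m hm t _ => fun y => ?_)
      (fun u v hu hv y => by rw [add_mul]; exact N.add_mem (hu y) (hv y))
    rw [mul_assoc]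
    exact Submodule.mul_mem_mul hm trivial
  have hker : ∀ b : Grassmann q,
      b - algebraMap ℝ (Grassmann q) (algebraMapInv b) ∈ N := by
    intro b
    induction b using ExteriorAlgebra.induction with
    | algebraMap r =>
        rw [algebraMap_leftInverse _ r, sub_self]
        exact N.zero_mem
    | ι m =>
        have h0 : algebraMapInv (R := ℝ) (M := Fin q → ℝ) (ι ℝ m) = 0 := by
          simp [algebraMapInv, ExteriorAlgebra.lift_ι_apply]
        rw [h0, map_zero, sub_zero]
        have : ιR m * 1 ∈ N := Submodule.mul_mem_mul (LinearMap.mem_range_self _ m) trivial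
        simpa using this
    | mul a b hA hB =>
        have key : a * b - algebraMap ℝ (Grassmann q) (algebraMapInv (a * b))
            = (a - algebraMap ℝ (Grassmann q) (algebraMapInv a)) * b
              + algebraMapInv a • (b - algebraMap ℝ (Grassmann q) (algebraMapInv b)) := by
          rw [map_mul, map_mul, Algebra.smul_def]
          noncomm_ring
        rw [key]
        exact N.add_mem (hright _ hA b) (N.smul_mem _ hB)
    | add a b hA hB =>
        rw [map_add, map_add, ← sub_add_sub_comm]
        exact N.add_mem hA hB
  have hpow : (LinearMap.range ιR) ^ (q + 1) = ⊥ := by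
    have hr : LinearMap.range ιR
        = Submodule.span ℝ (Set.range fun i : Fin q => ιR (Pi.basisFun ℝ (Fin q) i)) := by
      conv_lhs => rw [LinearMap.range_eq_map, ← (Pi.basisFun ℝ (Fin q)).span_eq,
        Submodule.map_span, ← Set.range_comp]
      rfl
    rw [hr, Submodule.span_pow]
    refine le_bot_iff.mp (Submodule.span_le.2 ?_)
    rintro z hz
    obtain ⟨g, hg⟩ := Set.mem_pow.1 hz
    have hsel : ∀ i : Fin (q + 1), ∃ k : Fin q, ιR (Pi.basisFun ℝ (Fin q) k) = (g i : Grassmann q) := by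
      intro i
      obtain ⟨k, hk⟩ := (g i).2
      exact ⟨k, hk⟩
    choose j hj using hsel
    have hz' : z = ιMulti ℝ (q + 1) (fun i => Pi.basisFun ℝ (Fin q) (j i)) := by
      rw [ιMulti_apply, ← hg]
      exact congrArg (fun L => List.prod (List.ofFn L)) (funext fun i => (hj i).symm)
    obtain ⟨i, i', hne, heq⟩ := Fintype.exists_ne_map_eq_of_card_lt j (by simp)
    have : ιMulti ℝ (q + 1) (fun i => Pi.basisFun ℝ (Fin q) (j i)) = 0 :=
      AlternatingMap.map_eq_zero_of_eq _ _ (by rw [heq]) hne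
    rw [SetLike.mem_coe, Submodule.mem_bot]
    exact hz'.trans this
  have hNpow : ∀ n : ℕ, N ^ (n + 1) ≤ (LinearMap.range ιR) ^ (n + 1) * ⊤ := by
    intro n
    induction n with
    | zero => rw [pow_one, pow_one]
    | succ n ih =>
        have htopN : (⊤ : Submodule ℝ (Grassmann q)) * N ≤ N :=
          Submodule.mul_le.2 fun t _ y hy => hleft t y hy
        calc N ^ (n + 2) = N ^ (n + 1) * N := pow_succ _ _
          _ ≤ ((LinearMap.range ιR) ^ (n + 1) * ⊤) * N := mul_le_mul' ih le_rfl
          _ = (LinearMap.range ιR) ^ (n + 1) * (⊤ * N) := mul_assoc _ _ _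
          _ ≤ (LinearMap.range ιR) ^ (n + 1) * N := mul_le_mul' le_rfl htopN
          _ = (LinearMap.range ιR) ^ (n + 1) * (LinearMap.range ιR * ⊤) := by rw [hN]
          _ = ((LinearMap.range ιR) ^ (n + 1) * LinearMap.range ιR) * ⊤ := (mul_assoc _ _ _).symm
          _ = (LinearMap.range ιR) ^ (n + 2) * ⊤ := by rw [← pow_succ]
  have haN : a ∈ N := by
    have := hker a
    rwa [ha, map_zero, sub_zero] at this
  have hmem : a ^ (q + 1) ∈ N ^ (q + 1) := Submodule.pow_mem_pow _ haN _
  have := hNpow q hmem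
  rw [hpow, Submodule.bot_mul] at this
  simpa using this


/-- algebraMap into the germ algebra is the germ of the constant function. -/
lemma germ_algebraMap {X : Type} [TopologicalSpace X] (x : X) (r : ℝ) :
    algebraMap ℝ (Filter.Germ (𝓝 x) ℝ) r = ((fun _ => r : X → ℝ) : Filter.Germ (𝓝 x) ℝ) := by
  rw [Algebra.algebraMap_eq_smul_one, ← Filter.Germ.coe_one, ← Filter.Germ.coe_smul]
  congr 1
  funext y
  simp

lemma eval_germ {X : Type} [TopologicalSpace X] {x : X} {q : ℕ}
    (φ : contGerms X x →ₐ[ℝ] Grassmann q) (f : X → ℝ)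
    (hf : ∀ᶠ y in 𝓝 x, ContinuousAt f y) :
    ExteriorAlgebra.algebraMapInv
      (φ ⟨(f : Filter.Germ (𝓝 x) ℝ), ⟨f, hf, rfl⟩⟩) = f x := by
  set ψ : contGerms X x →ₐ[ℝ] ℝ := (ExteriorAlgebra.algebraMapInv).comp φ with hψ
  set A : contGerms X x := ⟨(f : Filter.Germ (𝓝 x) ℝ), ⟨f, hf, rfl⟩⟩ with hA
  show ψ A = f x
  by_contra hne
  set c : ℝ := ψ A with hc
  have hfx : ContinuousAt f x := hf.self_of_nhds
  have hne' : f x ≠ c := Ne.symm hne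
  have hev : ∀ᶠ y in 𝓝 x, f y ≠ c := hfx.eventually_ne hne'
  set h : X → ℝ := fun y => (f y - c)⁻¹ with hh
  have hhc : ∀ᶠ y in 𝓝 x, ContinuousAt h y := by
    filter_upwards [hf, hev] with y h1 h2
    exact (h1.sub continuousAt_const).inv₀ (sub_ne_zero.2 h2)
  set B : contGerms X x := ⟨(h : Filter.Germ (𝓝 x) ℝ), ⟨h, hhc, rfl⟩⟩ with hB
  have hmul : (A - algebraMap ℝ (contGerms X x) c) * B = 1 := by
    apply Subtype.ext
    push_cast
    rw [germ_algebraMap x c, ← Filter.Germ.coe_sub, ← Filter.Germ.coe_mul, ← Filter.Germ.coe_one,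
      Filter.Germ.coe_eq]
    filter_upwards [hev] with y hy
    show (f y - c) * (f y - c)⁻¹ = 1
    exact mul_inv_cancel₀ (sub_ne_zero.2 hy)
  have h1 : ψ (A - algebraMap ℝ (contGerms X x) c) = 0 := by
    rw [map_sub, AlgHom.commutes, ← hc]
    simp
  have h2 := congrArg ψ hmul
  rw [map_mul, map_one, h1, zero_mul] at h2
  exact zero_ne_one h2
/-- Every unital `ℝ`-algebra homomorphism from the stalk at `x` of the sheaf of
continuous real-valued functions on `X` to the Grassmann algebra `∧(q)` is evaluation at
`x` followed by the unit map: `φ(germ of f) = f(x)·1`. -/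
theorem stmt18 (X : Type) [TopologicalSpace X] (x : X) (q : ℕ)
    (φ : contGerms X x →ₐ[ℝ] Grassmann q) (f : X → ℝ)
    (hf : ∀ᶠ y in 𝓝 x, ContinuousAt f y) :
    φ ⟨(f : Filter.Germ (𝓝 x) ℝ), ⟨f, hf, rfl⟩⟩
      = algebraMap ℝ (Grassmann q) (f x) := by
  have hq1 : (q + 1 : ℕ) ≠ 0 := Nat.succ_ne_zero q
  set k : ℝ := ((q + 1 : ℕ) : ℝ)⁻¹ with hk
  have hkpos : (0 : ℝ) ≤ k := by positivity
  have hk0 : k ≠ 0 := by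
    rw [hk]
    exact inv_ne_zero (by positivity)
  set p : X → ℝ := fun y => max (f y - f x) 0 with hp
  set m : X → ℝ := fun y => max (-(f y - f x)) 0 with hm
  have hpc : ∀ᶠ y in 𝓝 x, ContinuousAt p y :=
    hf.mono fun y hy => (hy.sub continuousAt_const).max continuousAt_const
  have hmc : ∀ᶠ y in 𝓝 x, ContinuousAt m y :=
    hf.mono fun y hy => ((hy.sub continuousAt_const).neg).max continuousAt_const
  set rp : X → ℝ := fun y => (p y) ^ k with hrp
  set rm : X → ℝ := fun y => (m y) ^ k with hrm
  have hrpc : ∀ᶠ y in 𝓝 x, ContinuousAt rp y :=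
    hpc.mono fun y hy => (Real.continuousAt_rpow_const (p y) k (Or.inr hkpos)).comp hy
  have hrmc : ∀ᶠ y in 𝓝 x, ContinuousAt rm y :=
    hmc.mono fun y hy => (Real.continuousAt_rpow_const (m y) k (Or.inr hkpos)).comp hy
  have hppow : rp ^ (q + 1) = p := funext fun y => by
    show (p y ^ k) ^ (q + 1) = p y
    rw [hk]
    exact Real.rpow_inv_natCast_pow (le_max_right _ _) hq1
  have hmpow : rm ^ (q + 1) = m := funext fun y => by
    show (m y ^ k) ^ (q + 1) = m y
    rw [hk]
    exact Real.rpow_inv_natCast_pow (le_max_right _ _) hq1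
  set P : contGerms X x := ⟨(p : Filter.Germ (𝓝 x) ℝ), ⟨p, hpc, rfl⟩⟩ with hP0
  set M : contGerms X x := ⟨(m : Filter.Germ (𝓝 x) ℝ), ⟨m, hmc, rfl⟩⟩ with hM0
  set RP : contGerms X x := ⟨(rp : Filter.Germ (𝓝 x) ℝ), ⟨rp, hrpc, rfl⟩⟩ with hRP0
  set RM : contGerms X x := ⟨(rm : Filter.Germ (𝓝 x) ℝ), ⟨rm, hrmc, rfl⟩⟩ with hRM0
  have hPeq : P = RP ^ (q + 1) := by
    apply Subtype.ext
    rw [SubmonoidClass.coe_pow]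
    show (p : Filter.Germ (𝓝 x) ℝ) = ((rp : Filter.Germ (𝓝 x) ℝ)) ^ (q + 1)
    rw [← Filter.Germ.coe_pow, hppow]
  have hMeq : M = RM ^ (q + 1) := by
    apply Subtype.ext
    rw [SubmonoidClass.coe_pow]
    show (m : Filter.Germ (𝓝 x) ℝ) = ((rm : Filter.Germ (𝓝 x) ℝ)) ^ (q + 1)
    rw [← Filter.Germ.coe_pow, hmpow]
  have hrpx : rp x = 0 := by
    show (p x) ^ k = 0
    have hpx : p x = 0 := by simp [hp]
    rw [hpx]
    exact Real.zero_rpow hk0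
  have hrmx : rm x = 0 := by
    show (m x) ^ k = 0
    have hmx : m x = 0 := by simp [hm]
    rw [hmx]
    exact Real.zero_rpow hk0
  have hbodyP : ExteriorAlgebra.algebraMapInv (φ RP) = 0 := by
    rw [hRP0, eval_germ φ rp hrpc, hrpx]
  have hbodyM : ExteriorAlgebra.algebraMapInv (φ RM) = 0 := by
    rw [hRM0, eval_germ φ rm hrmc, hrmx]
  have hφP : φ P = 0 := by
    rw [hPeq, map_pow]
    exact grass_pow_zero _ hbodyP
  have hφM : φ M = 0 := by
    rw [hMeq, map_pow]
    exact grass_pow_zero _ hbodyM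
  have hAeq : (⟨(f : Filter.Germ (𝓝 x) ℝ), ⟨f, hf, rfl⟩⟩ : contGerms X x)
      = algebraMap ℝ (contGerms X x) (f x) + P - M := by
    apply Subtype.ext
    push_cast
    rw [germ_algebraMap x (f x), ← Filter.Germ.coe_add, ← Filter.Germ.coe_sub]
    congr 1
    funext y
    show f y = (f x + p y) - m y
    have h := max_zero_sub_max_neg_zero_eq_self (f y - f x)
    rw [hp, hm]
    dsimp only
    linarith [h]
  rw [hAeq, map_sub, map_add, AlgHom.commutes, hφP, hφM, add_zero, sub_zero]
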